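/- arXiv:1504.08265 — 6 statements merged into one kernel-verified Lean document; each statement's English description precedes it below -/
import Mathlib

section
/- Let r=(v,t) be a replica and ρ∈ℕ with ρ ≤ v+t. Then every directed path in the grid from (0,0) to r contains at least ρ edges that are edges of the quarter ball B(r,ρ). -/
/-- A replica is a pair `(v, t)` of a network node and a time. -/
abbrev Replica : Type := ℕ × ℕ

/-- A (directed) grid edge is a pair of replicas. -/
abbrev GEdge : Type := Replica × Replica

/-- Horizontal directed edge `((v,t),(v+1,t))`. -/
def isHoriz (e : GEdge) : Prop := e.2 = (e.1.1 + 1, e.1.2)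

/-- Vertical arc `((v,t),(v,t+1))`. -/
def isArc (e : GEdge) : Prop := e.2 = (e.1.1, e.1.2 + 1)

def isGridEdge (e : GEdge) : Prop := isHoriz e ∨ isArc e

/-- The quarter ball `B(r,ρ)`: replicas `(u,s)` with `u ≤ v`, `s ≤ t` and
`(v−u)+(t−s) ≤ ρ`. -/
def qball (r : Replica) (ρ : ℕ) : Set Replica :=
  {q | q.1 ≤ r.1 ∧ q.2 ≤ r.2 ∧ (r.1 - q.1) + (r.2 - q.2) ≤ ρ}

/-- Grid edges with both endpoints in the quarter ball `B(r,ρ)`. -/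
def ballEdge (r : Replica) (ρ : ℕ) (e : GEdge) : Prop :=
  isGridEdge e ∧ e.1 ∈ qball r ρ ∧ e.2 ∈ qball r ρ

/-!
Every grid step raises the coordinate sum by one and both coordinates weakly, so a path from
`(0,0)` to `r = (v,t)` has exactly `v + t` steps, and its vertex after `k` steps lies
coordinatewise below `r` at distance `v + t - k` from it. Hence the last `ρ` edges of the path
join vertices of `B(r,ρ)`.
-/

open Set

lemma isGridEdge.fst_le_snd {e : GEdge} (he : isGridEdge e) : e.1 ≤ e.2 := by
  rcases he with h | h <;> rw [h] <;> simp [Prod.le_def]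

lemma isGridEdge.snd_sum {e : GEdge} (he : isGridEdge e) :
    e.2.1 + e.2.2 = e.1.1 + e.1.2 + 1 := by
  rcases he with h | h <;> rw [h] <;> omega

lemma mem_qball_of_le {q r : Replica} {ρ : ℕ} (hqr : q ≤ r) (hdist : r.1 + r.2 ≤ q.1 + q.2 + ρ) :
    q ∈ qball r ρ :=
  ⟨hqr.1, hqr.2, by have := hqr.1; have := hqr.2; omega⟩

section GridPath

variable {L : ℕ} {f : ℕ → Replica}

lemma gridPath_monotoneOn (hstep : ∀ k < L, isGridEdge (f k, f (k + 1))) :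
    MonotoneOn f (Iic L) :=
  monotoneOn_of_le_succ ordConnected_Iic fun k _ _ hk => (hstep k hk).fst_le_snd

lemma gridPath_sum (hstep : ∀ k < L, isGridEdge (f k, f (k + 1))) :
    ∀ k ≤ L, (f k).1 + (f k).2 = (f 0).1 + (f 0).2 + k
  | 0, _ => rfl
  | k + 1, hk => by
    rw [(hstep k hk).snd_sum, gridPath_sum hstep k (by omega)]
    omega

lemma gridPath_mem_qball {r : Replica} {ρ : ℕ} (hstep : ∀ k < L, isGridEdge (f k, f (k + 1)))
    (hL : f L = r) {k : ℕ} (hk : k ≤ L) (hkρ : L ≤ k + ρ) : f k ∈ qball r ρ := by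
  subst hL
  refine mem_qball_of_le (gridPath_monotoneOn hstep hk self_mem_Iic hk) ?_
  rw [gridPath_sum hstep k hk, gridPath_sum hstep L le_rfl]
  omega

end GridPath

/-- Every directed grid path from `(0,0)` to `r = (v,t)` contains at least `ρ`
edges of the quarter ball `B(r,ρ)`, provided `ρ ≤ v + t`. -/
theorem path_meets_qball (r : Replica) (ρ : ℕ) (hρ : ρ ≤ r.1 + r.2)
    (L : ℕ) (f : ℕ → Replica) (h0 : f 0 = (0, 0)) (hL : f L = r)
    (hstep : ∀ k < L, isGridEdge (f k, f (k + 1))) :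
    ρ ≤ {k | k < L ∧ ballEdge r ρ (f k, f (k + 1))}.ncard := by
  have hLr : L = r.1 + r.2 := by
    simpa [h0, hL] using (gridPath_sum hstep L le_rfl).symm
  have hlast : Ico (L - ρ) L ⊆ {k | k < L ∧ ballEdge r ρ (f k, f (k + 1))} :=
    fun k ⟨hk₁, hk₂⟩ => ⟨hk₂, hstep k hk₂,
      gridPath_mem_qball hstep hL hk₂.le (by omega), gridPath_mem_qball hstep hL hk₂ (by omega)⟩
  calc ρ = (Ico (L - ρ) L).ncard := by rw [ncard_Ico_nat]; omega
    _ ≤ _ := ncard_le_ncard hlast ((finite_Iio L).subset fun k hk => hk.1)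
end

section
/- If r_i and r_j are two distinct covered requests, then the quarter balls SQball(i) and SQball(j) are edge-disjoint. -/
/-!
Suppose `j < i` and an edge lies in both `SQball(j)` and `SQball(i)`; let `p` be its head, so `p`
is at `ℓ₁`-distance `< ρ(j)` from `r_j` and `< ρ(i)` from `r_i`. As `r_j` is covered, its SQ4
path at time `t_j` passes through `(p.1, t_j)`. This replica already exists when `r_i` arrives,
and its `d∞`-distance to `r_i` is `max (v_i - p.1) (t_i - t_j) < ρ(i)`, contradicting the
minimality of `ρ(i)`.
-/

open Finset

/-- Two quarter balls are edge-disjoint if they share no grid edge. -/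
def BallsEdgeDisjoint (r : Replica) (ρ : ℕ) (r' : Replica) (ρ' : ℕ) : Prop :=
  ∀ e : GEdge, ¬ (ballEdge r ρ e ∧ ballEdge r' ρ' e)

/-- The square `Sq(r,ρ) = [v−ρ,v] × [t−ρ,t]`. -/
def SqRect (r : Replica) (ρ : ℕ) : Set Replica :=
  {q | r.1 - ρ ≤ q.1 ∧ q.1 ≤ r.1 ∧ r.2 - ρ ≤ q.2 ∧ q.2 ≤ r.2}

/-- Directed `L∞` distance `d∞(q,r)`: `max(v−u, t−s)` if `u ≤ v` and `s ≤ t`,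
and `∞` otherwise. -/
def distInf (q r : Replica) : ℕ∞ :=
  if q.1 ≤ r.1 ∧ q.2 ≤ r.2 then ((max (r.1 - q.1) (r.2 - q.2) : ℕ) : ℕ∞) else ⊤

/-- The replicas of an edge set: `(0,0)` together with all endpoints of its edges. -/
def Repl (F : Finset GEdge) : Set Replica :=
  insert ((0, 0) : Replica) {q | ∃ e ∈ F, q = e.1 ∨ q = e.2}

/-- The arcs of the vertical path at node `u` from time `s` to time `τ`. -/
def vertPath (u s τ : ℕ) : Finset GEdge :=
  (Finset.range (τ - s)).image (fun k => ((u, s + k), (u, s + k + 1)))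

/-- The horizontal edges of the path at time `τ` from node `u` to node `w`. -/
def horizPath (τ u w : ℕ) : Finset GEdge :=
  (Finset.range (w - u)).image (fun k => ((u + k, τ), (u + k + 1, τ)))

/-- A directed path from `a` to `b` all of whose edges belong to `F`. -/
def PathIn (F : Finset GEdge) (a b : Replica) : Prop :=
  ∃ (L : ℕ) (f : ℕ → Replica), f 0 = a ∧ f L = b ∧ ∀ k < L, (f k, f (k + 1)) ∈ F

/-- An execution of Algorithm `Square` on a request sequence
`r_1 = (v 1, t 1), …, r_N = (v N, t N)` (with `t 0 = 0` and nondecreasing times).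
`sol i` is the edge set after handling request `i`; `ρ i` is the radius of
request `i`; `(u' i, s' i)` is its closest replica and `(us i, ss i)` its
serving replica.  The fields record the specification SQ1–SQ5. -/
structure SquareRun where
  N : ℕ
  v : ℕ → ℕ
  t : ℕ → ℕ
  ρ : ℕ → ℕ
  u' : ℕ → ℕ
  s' : ℕ → ℕ
  us : ℕ → ℕ
  ss : ℕ → ℕ
  sol : ℕ → Finset GEdge
  t_zero : t 0 = 0
  t_mono : ∀ i j, i ≤ j → j ≤ N → t i ≤ t j
  sol_zero : sol 0 = ∅
  /-- SQ2: `ρ i` is a lower bound on the distance from every replica of the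
  current solution (after the SQ1 additions) to `r_i`. -/
  rho_min : ∀ i, 1 ≤ i → i ≤ N →
    ∀ q ∈ Repl (sol (i - 1) ∪ vertPath 0 (t (i - 1)) (t i)),
      (ρ i : ℕ∞) ≤ distInf q (v i, t i)
  /-- SQ2: the closest replica belongs to the current solution. -/
  closest_mem : ∀ i, 1 ≤ i → i ≤ N →
    (u' i, s' i) ∈ Repl (sol (i - 1) ∪ vertPath 0 (t (i - 1)) (t i))
  /-- SQ2: the closest replica attains the radius. -/
  closest_dist : ∀ i, 1 ≤ i → i ≤ N →
    distInf (u' i, s' i) (v i, t i) = (ρ i : ℕ∞)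
  /-- SQ2: among replicas of node `u' i`, the closest replica is the latest. -/
  closest_late : ∀ i, 1 ≤ i → i ≤ N → ∀ s, s ≤ t i →
    (u' i, s) ∈ Repl (sol (i - 1) ∪ vertPath 0 (t (i - 1)) (t i)) → s ≤ s' i
  /-- SQ3: the serving replica is in the current solution and in `Sq(r_i, 5ρ i)`. -/
  serv_mem : ∀ i, 1 ≤ i → i ≤ N →
    (us i, ss i) ∈ Repl (sol (i - 1) ∪ vertPath 0 (t (i - 1)) (t i)) ∧
      (us i, ss i) ∈ SqRect (v i, t i) (5 * ρ i)
  /-- SQ3: the serving node is leftmost. -/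
  serv_min : ∀ i, 1 ≤ i → i ≤ N →
    ∀ q ∈ Repl (sol (i - 1) ∪ vertPath 0 (t (i - 1)) (t i)),
      q ∈ SqRect (v i, t i) (5 * ρ i) → us i ≤ q.1
  /-- SQ3: among those, the serving time is latest. -/
  serv_late : ∀ i, 1 ≤ i → i ≤ N →
    ∀ q ∈ Repl (sol (i - 1) ∪ vertPath 0 (t (i - 1)) (t i)),
      q ∈ SqRect (v i, t i) (5 * ρ i) → q.1 = us i → q.2 ≤ ss i
  /-- SQ1 + SQ4 + SQ5: the edges added while handling request `i`. -/
  step : ∀ i, 1 ≤ i → i ≤ N →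
    sol i = (sol (i - 1) ∪ vertPath 0 (t (i - 1)) (t i))
      ∪ vertPath (us i) (ss i) (t i) ∪ horizPath (t i) (us i) (v i)
      ∪ vertPath (us i) (t i) (t i + 4 * ρ i)

namespace SquareRun

variable (S : SquareRun)

/-- The `i`-th request replica. -/
def req (i : ℕ) : Replica := (S.v i, S.t i)

/-- The edges added in steps SQ4 and SQ5 while handling request `i`. -/
def added45 (i : ℕ) : Finset GEdge :=
  vertPath (S.us i) (S.ss i) (S.t i) ∪ horizPath (S.t i) (S.us i) (S.v i)
    ∪ vertPath (S.us i) (S.t i) (S.t i + 4 * S.ρ i)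

/-- Request `i` is covered if `v_i − u^s_i ≥ ρ(i)`. -/
def covered (i : ℕ) : Prop := S.ρ i ≤ S.v i - S.us i

def uncovered (i : ℕ) : Prop := ¬ S.covered i

/-- A feasible solution of the DMCD instance given by the requests of `S`. -/
def Feasible (F : Finset GEdge) : Prop :=
  (∀ e ∈ F, isGridEdge e) ∧
  (∀ i, 1 ≤ i → i ≤ S.N → PathIn F (0, 0) (S.req i)) ∧
  (∀ τ, τ < S.t S.N → ∃ w, ((w, τ), (w, τ + 1)) ∈ F)

/-- `S.IsParent i j` means `parent(j) = i`:  `i` is the least index greater than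
`j` such that `r_i` is uncovered and `SQball(j)`, `SQball(i)` are not
edge-disjoint. -/
def IsParent (i j : ℕ) : Prop :=
  1 ≤ j ∧ j < i ∧ i ≤ S.N ∧ S.uncovered j ∧ S.uncovered i ∧
    ¬ BallsEdgeDisjoint (S.req j) (S.ρ j) (S.req i) (S.ρ i) ∧
    ∀ k, j < k → k < i → S.uncovered k →
      BallsEdgeDisjoint (S.req j) (S.ρ j) (S.req k) (S.ρ k)

/-- A root: an uncovered request with no parent. -/
def IsRoot (i : ℕ) : Prop :=
  1 ≤ i ∧ i ≤ S.N ∧ S.uncovered i ∧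
    ∀ j, i < j → j ≤ S.N → S.uncovered j →
      BallsEdgeDisjoint (S.req i) (S.ρ i) (S.req j) (S.ρ j)

/-- `i ∈ Tree(iStar)`: one can go from `i` to `iStar` by repeatedly passing from
a child to its parent. -/
def InTree (i iStar : ℕ) : Prop :=
  Relation.ReflTransGen (fun a b => S.IsParent b a) i iStar

end SquareRun

lemma BallsEdgeDisjoint.symm {r r' : Replica} {ρ ρ' : ℕ} (h : BallsEdgeDisjoint r ρ r' ρ') :
    BallsEdgeDisjoint r' ρ' r ρ :=
  fun e he => h e he.symm

/-- The tail of an edge is one step farther from `r` than its head. -/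
lemma ballEdge.snd_dist_lt {r : Replica} {ρ : ℕ} {e : GEdge} (he : ballEdge r ρ e) :
    e.2.1 ≤ r.1 ∧ e.2.2 ≤ r.2 ∧ (r.1 - e.2.1) + (r.2 - e.2.2) < ρ := by
  obtain ⟨⟨a, s⟩, ⟨b, s'⟩⟩ := e
  obtain ⟨hgrid, ⟨-, -, htail⟩, ⟨hb, hs', -⟩⟩ := he
  simp only [isGridEdge, isHoriz, isArc, Prod.mk.injEq] at hgrid htail hb hs' ⊢
  omega

lemma Repl_mono {F G : Finset GEdge} (h : F ⊆ G) : Repl F ⊆ Repl G :=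
  Set.insert_subset_insert fun _ ⟨e, he, hq⟩ => ⟨e, h he, hq⟩

lemma mem_Repl_of_horizPath_subset {F : Finset GEdge} {τ u w x : ℕ}
    (hF : horizPath τ u w ⊆ F) (huw : u < w) (hux : u ≤ x) (hxw : x ≤ w) :
    ((x, τ) : Replica) ∈ Repl F := by
  refine Set.mem_insert_of_mem _ ?_
  rcases hxw.lt_or_eq with hxw | rfl
  · refine ⟨((x, τ), (x + 1, τ)), hF ?_, Or.inl rfl⟩
    exact Finset.mem_image.2 ⟨x - u, by simp only [Finset.mem_range]; omega, by
      rw [Nat.add_sub_cancel' hux]⟩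
  · refine ⟨((x - 1, τ), (x, τ)), hF ?_, Or.inr rfl⟩
    exact Finset.mem_image.2 ⟨x - 1 - u, by simp only [Finset.mem_range]; omega, by
      rw [Nat.add_sub_cancel' (by omega), Nat.sub_add_cancel (by omega)]⟩

namespace SquareRun

variable (S : SquareRun)

lemma sol_subset_sol_succ {n : ℕ} (hn : n < S.N) : S.sol n ⊆ S.sol (n + 1) := by
  rw [S.step (n + 1) (by omega) hn, Nat.add_sub_cancel]
  exact subset_union_left.trans <| subset_union_left.trans <| subset_union_left.trans
    subset_union_left

lemma sol_mono {a b : ℕ} (hab : a ≤ b) (hb : b ≤ S.N) : S.sol a ⊆ S.sol b := by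
  induction b, hab using Nat.le_induction with
  | base => exact subset_rfl
  | succ n _ ih => exact (ih (by omega)).trans (S.sol_subset_sol_succ hb)

lemma horizPath_subset_sol {j : ℕ} (hj1 : 1 ≤ j) (hjN : j ≤ S.N) :
    horizPath (S.t j) (S.us j) (S.v j) ⊆ S.sol j := by
  rw [S.step j hj1 hjN]
  exact subset_union_right.trans subset_union_left

/-- Coverage of `r_j` means that its SQ4 path spans the nodes `[v_j - ρ(j), v_j]` at time `t_j`. -/
lemma mem_Repl_of_covered {i j x : ℕ} (hj1 : 1 ≤ j) (hji : j < i) (hiN : i ≤ S.N)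
    (hcj : S.covered j) (hρ : 0 < S.ρ j) (hx : S.v j - S.ρ j ≤ x) (hxv : x ≤ S.v j) :
    ((x, S.t j) : Replica) ∈ Repl (S.sol (i - 1) ∪ vertPath 0 (S.t (i - 1)) (S.t i)) := by
  have hcov : S.ρ j ≤ S.v j - S.us j := hcj
  have hpath : horizPath (S.t j) (S.us j) (S.v j) ⊆ S.sol (i - 1) :=
    (S.horizPath_subset_sol hj1 (by omega)).trans (S.sol_mono (by omega) (by omega))
  exact Repl_mono subset_union_left <|
    mem_Repl_of_horizPath_subset hpath (by omega) (by omega) hxv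

lemma balls_disjoint_of_covered_of_lt {i j : ℕ} (hj1 : 1 ≤ j) (hji : j < i) (hiN : i ≤ S.N)
    (hcj : S.covered j) : BallsEdgeDisjoint (S.req j) (S.ρ j) (S.req i) (S.ρ i) := by
  rintro e ⟨hej, hei⟩
  obtain ⟨hxj, hsj, hdj⟩ := hej.snd_dist_lt
  obtain ⟨hxi, -, hdi⟩ := hei.snd_dist_lt
  simp only [req] at hxj hsj hdj hxi hdi
  have htji : S.t j ≤ S.t i := S.t_mono j i hji.le hiN
  have hrep := S.mem_Repl_of_covered hj1 hji hiN hcj (by omega) (by omega) hxj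
  have hρi := S.rho_min i (by omega) hiN _ hrep
  rw [distInf, if_pos ⟨hxi, htji⟩, Nat.cast_le, le_max_iff] at hρi
  omega

end SquareRun

/-- The quarter balls of two distinct covered requests are edge-disjoint. -/
theorem covered_balls_disjoint (S : SquareRun) (i j : ℕ)
    (hi1 : 1 ≤ i) (hiN : i ≤ S.N) (hj1 : 1 ≤ j) (hjN : j ≤ S.N)
    (hci : S.covered i) (hcj : S.covered j) (hij : i ≠ j) :
    BallsEdgeDisjoint (S.req i) (S.ρ i) (S.req j) (S.ρ j) := by
  rcases hij.lt_or_gt with hlt | hgt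
  · exact S.balls_disjoint_of_covered_of_lt hi1 hlt hjN hci
  · exact (S.balls_disjoint_of_covered_of_lt hj1 hgt hiN hcj).symm
end

section
/- If request r_i is uncovered, then its radius is determined by the time difference from its closest replica: ρ(i) = t_i − s'_i. -/
open Finset

theorem distInf_eq_coe_iff {q r : Replica} {n : ℕ} :
    distInf q r = n ↔ q.1 ≤ r.1 ∧ q.2 ≤ r.2 ∧ max (r.1 - q.1) (r.2 - q.2) = n := by
  unfold distInf
  split_ifs with h
  · simp [h]
  · simp only [ENat.top_ne_natCast, false_iff]
    tauto

theorem mem_sqRect_of_distInf_le {q r : Replica} {n : ℕ} (h : distInf q r ≤ n) :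
    q ∈ SqRect r n := by
  unfold distInf at h
  split_ifs at h with hqr
  · have hmax : max (r.1 - q.1) (r.2 - q.2) ≤ n := by exact_mod_cast h
    simp only [SqRect, Set.mem_ofPred_eq]
    omega
  · simp at h

theorem sqRect_mono (r : Replica) {m n : ℕ} (hmn : m ≤ n) : SqRect r m ⊆ SqRect r n := by
  intro q hq
  simp only [SqRect, Set.mem_ofPred_eq] at hq ⊢
  omega

namespace SquareRun

variable (S : SquareRun) {i : ℕ}

theorem closest_mem_sqRect (hi1 : 1 ≤ i) (hiN : i ≤ S.N) :
    (S.u' i, S.s' i) ∈ SqRect (S.v i, S.t i) (5 * S.ρ i) :=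
  sqRect_mono _ (Nat.le_mul_of_pos_left _ (by norm_num))
    (mem_sqRect_of_distInf_le (S.closest_dist i hi1 hiN).le)

theorem us_le_u' (hi1 : 1 ≤ i) (hiN : i ≤ S.N) : S.us i ≤ S.u' i :=
  S.serv_min i hi1 hiN _ (S.closest_mem i hi1 hiN) (S.closest_mem_sqRect hi1 hiN)

theorem sub_u'_lt_rho_of_uncovered (hi1 : 1 ≤ i) (hiN : i ≤ S.N) (hu : S.uncovered i) :
    S.v i - S.u' i < S.ρ i := by
  have := S.us_le_u' hi1 hiN
  simp only [uncovered, covered] at hu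
  omega

end SquareRun

/-- For an uncovered request, the radius equals the time difference from its
closest replica: `ρ(i) = t_i − s'_i`. -/
theorem uncovered_radius_eq_time (S : SquareRun) (i : ℕ)
    (hi1 : 1 ≤ i) (hiN : i ≤ S.N) (hu : S.uncovered i) :
    S.ρ i = S.t i - S.s' i := by
  -- `ρ(i) = max (v_i − u'_i) (t_i − s'_i)`, and the serving node lies left of `u'_i`.
  obtain ⟨-, -, hmax⟩ := distInf_eq_coe_iff.mp (S.closest_dist i hi1 hiN)
  have hhoriz := S.sub_u'_lt_rho_of_uncovered hi1 hiN hu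
  simp only at hmax
  omega
end

section
/- For every request r_i, no replica (w,s) with v_i−5ρ(i) ≤ w < u^s_i and t_i−5ρ(i) ≤ s ≤ t_i is a replica of the solution Square(i). -/
open Finset

/-
SQ3 chooses the serving node `u^s_i` leftmost among the replicas of the current solution in
`Sq(r_i, 5ρ(i))`, so the rectangle left of it contains none of them; and every edge added in
SQ4–SQ5 lies on node `u^s_i` or to its right.
-/

lemma mem_Repl_union_iff {F G : Finset GEdge} {q : Replica} :
    q ∈ Repl (F ∪ G) ↔ q ∈ Repl F ∨ ∃ e ∈ G, q = e.1 ∨ q = e.2 := by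
  simp only [Repl, Set.mem_insert_iff, Set.mem_ofPred_eq, Finset.mem_union, or_and_right,
    exists_or, or_assoc]

lemma fst_eq_of_mem_vertPath {u s τ : ℕ} {e : GEdge} {q : Replica}
    (he : e ∈ vertPath u s τ) (hq : q = e.1 ∨ q = e.2) : q.1 = u := by
  obtain ⟨k, -, rfl⟩ := Finset.mem_image.1 he
  rcases hq with rfl | rfl <;> rfl

lemma le_fst_of_mem_horizPath {τ u w : ℕ} {e : GEdge} {q : Replica}
    (he : e ∈ horizPath τ u w) (hq : q = e.1 ∨ q = e.2) : u ≤ q.1 := by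
  obtain ⟨k, -, rfl⟩ := Finset.mem_image.1 he
  rcases hq with rfl | rfl <;> dsimp only <;> omega

namespace SquareRun

variable (S : SquareRun)

lemma sol_eq_union_added45 {i : ℕ} (hi1 : 1 ≤ i) (hiN : i ≤ S.N) :
    S.sol i = (S.sol (i - 1) ∪ vertPath 0 (S.t (i - 1)) (S.t i)) ∪ S.added45 i := by
  rw [S.step i hi1 hiN, added45]
  simp only [Finset.union_assoc]

lemma us_le_fst_of_mem_added45 (i : ℕ) {e : GEdge} {q : Replica}
    (he : e ∈ S.added45 i) (hq : q = e.1 ∨ q = e.2) : S.us i ≤ q.1 := by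
  simp only [added45, Finset.mem_union] at he
  rcases he with (hdown | hright) | hup
  · exact (fst_eq_of_mem_vertPath hdown hq).ge
  · exact le_fst_of_mem_horizPath hright hq
  · exact (fst_eq_of_mem_vertPath hup hq).ge

end SquareRun

/-- No replica of the rectangle `[v_i−5ρ(i), u^s_i−1] × [t_i−5ρ(i), t_i]`
belongs to the solution `Square(i)`. -/
theorem no_replica_in_left_rectangle (S : SquareRun) (i : ℕ)
    (hi1 : 1 ≤ i) (hiN : i ≤ S.N) (w s : ℕ)
    (hw1 : S.v i - 5 * S.ρ i ≤ w) (hw2 : w < S.us i)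
    (hs1 : S.t i - 5 * S.ρ i ≤ s) (hs2 : s ≤ S.t i) :
    (w, s) ∉ Repl (S.sol i) := by
  intro hmem
  rw [S.sol_eq_union_added45 hi1 hiN, mem_Repl_union_iff] at hmem
  rcases hmem with hcurrent | ⟨e, he, hq⟩
  · have hus_le_v : S.us i ≤ S.v i := (S.serv_mem i hi1 hiN).2.2.1
    have hus_le_w := S.serv_min i hi1 hiN (w, s) hcurrent ⟨hw1, by omega, hs1, hs2⟩
    exact absurd hus_le_w (Nat.not_le.2 hw2)
  · exact absurd (S.us_le_fst_of_mem_added45 i he hq) (Nat.not_le.2 hw2)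
end

section
/- Let r_i be a request and suppose its closest replica q'_i=(u'_i,s'_i) is first added to Square's solution while Square handles request r_j for some j<i (that is, q'_i is a replica of Square(j) but not of Square(j−1)). Then s'_i ≥ t_j. -/
open Finset

lemma Repl_union (F G : Finset GEdge) : Repl (F ∪ G) = Repl F ∪ Repl G := by
  ext q
  simp only [Repl, Set.mem_insert_iff, Set.mem_ofPred_eq, Set.mem_union, Finset.mem_union]
  constructor
  · rintro (h0 | ⟨e, he | he, hq⟩)
    · exact Or.inl (Or.inl h0)
    · exact Or.inl (Or.inr ⟨e, he, hq⟩)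
    · exact Or.inr (Or.inr ⟨e, he, hq⟩)
  · rintro ((h0 | ⟨e, he, hq⟩) | (h0 | ⟨e, he, hq⟩))
    · exact Or.inl h0
    · exact Or.inr ⟨e, Or.inl he, hq⟩
    · exact Or.inl h0
    · exact Or.inr ⟨e, Or.inr he, hq⟩

lemma mem_Repl_vertPath {q : Replica} {u a τ : ℕ} :
    q ∈ Repl (vertPath u a τ) ↔ q = (0, 0) ∨ (q.1 = u ∧ a ≤ q.2 ∧ q.2 ≤ τ ∧ a < τ) := by
  obtain ⟨w, s⟩ := q
  simp only [Repl, vertPath, Set.mem_insert_iff, Set.mem_ofPred_eq, Finset.mem_image,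
    Finset.mem_range]
  constructor
  · rintro (h0 | ⟨_, ⟨k, hk, rfl⟩, hq⟩)
    · exact Or.inl h0
    · right
      rcases hq with hq | hq <;> simp only [Prod.mk.injEq] at hq <;> omega
  · rintro (h0 | ⟨rfl, has, hsτ, haτ⟩)
    · exact Or.inl h0
    right
    rcases Nat.lt_or_ge s τ with hs | hs
    · exact ⟨_, ⟨s - a, by omega, rfl⟩, Or.inl (Prod.ext rfl (by dsimp only; omega))⟩
    · exact ⟨_, ⟨τ - a - 1, by omega, rfl⟩, Or.inr (Prod.ext rfl (by dsimp only; omega))⟩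

lemma mem_Repl_horizPath {q : Replica} {τ u w : ℕ} (hq : q ∈ Repl (horizPath τ u w)) :
    q = (0, 0) ∨ q.2 = τ := by
  simp only [Repl, horizPath, Set.mem_insert_iff, Set.mem_ofPred_eq, Finset.mem_image] at hq
  rcases hq with h0 | ⟨_, ⟨k, _, rfl⟩, rfl | rfl⟩
  · exact Or.inl h0
  all_goals exact Or.inr rfl

namespace SquareRun

variable (S : SquareRun)

lemma sol_subset {j k : ℕ} (hjk : j ≤ k) (hk : k ≤ S.N) : S.sol j ⊆ S.sol k := by
  induction k, hjk using Nat.le_induction with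
  | base => exact subset_rfl
  | succ k _ ih =>
    refine (ih (by omega)).trans ?_
    rw [S.step (k + 1) (by omega) hk, Nat.add_sub_cancel]
    exact subset_union_left.trans (subset_union_left.trans (subset_union_left.trans
      subset_union_left))

lemma Repl_sol {j : ℕ} (hj1 : 1 ≤ j) (hjN : j ≤ S.N) :
    Repl (S.sol j) = Repl (S.sol (j - 1)) ∪ Repl (vertPath 0 (S.t (j - 1)) (S.t j))
      ∪ Repl (vertPath (S.us j) (S.ss j) (S.t j)) ∪ Repl (horizPath (S.t j) (S.us j) (S.v j))
      ∪ Repl (vertPath (S.us j) (S.t j) (S.t j + 4 * S.ρ j)) := by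
  simp only [S.step j hj1 hjN, Repl_union]

lemma new_replica_time_ge_or_top_mem {j : ℕ} (hj1 : 1 ≤ j) (hjN : j ≤ S.N) {q : Replica}
    (hq : q ∈ Repl (S.sol j)) (hnew : q ∉ Repl (S.sol (j - 1))) :
    S.t j ≤ q.2 ∨ (q.1, S.t j) ∈ Repl (S.sol j) := by
  have hq0 : q ≠ (0, 0) := fun h => hnew (h ▸ Set.mem_insert _ _)
  have top_mem {u a : ℕ} (hpath : vertPath u a (S.t j) ⊆ S.sol j)
      (hq' : q ∈ Repl (vertPath u a (S.t j))) : (q.1, S.t j) ∈ Repl (S.sol j) := by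
    obtain ⟨rfl, -, -, ha⟩ := (mem_Repl_vertPath.mp hq').resolve_left hq0
    exact Repl_mono hpath (mem_Repl_vertPath.mpr (Or.inr ⟨rfl, ha.le, le_rfl, ha⟩))
  have hsol := S.step j hj1 hjN
  rw [S.Repl_sol hj1 hjN] at hq
  rcases hq with ((((hold | hsq1) | hsq4) | hhoriz) | hsq5)
  · exact absurd hold hnew
  · exact Or.inr (top_mem (by rw [hsol]; intro e he; simp [he]) hsq1)
  · exact Or.inr (top_mem (by rw [hsol]; intro e he; simp [he]) hsq4)
  · exact Or.inl ((mem_Repl_horizPath hhoriz).resolve_left hq0).ge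
  · exact Or.inl ((mem_Repl_vertPath.mp hsq5).resolve_left hq0).2.1

end SquareRun

/-- If the closest replica of request `i` is first added while Square handles
request `j < i`, then `s'_i ≥ t_j`. -/
theorem closest_replica_time_ge (S : SquareRun) (i j : ℕ)
    (hi1 : 1 ≤ i) (hiN : i ≤ S.N) (hj1 : 1 ≤ j) (hji : j < i)
    (hmem : (S.u' i, S.s' i) ∈ Repl (S.sol j))
    (hnot : (S.u' i, S.s' i) ∉ Repl (S.sol (j - 1))) :
    S.t j ≤ S.s' i := by
  rcases S.new_replica_time_ge_or_top_mem hj1 (hji.le.trans hiN) hmem hnot with hle | htop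
  · exact hle
  have hsub : S.sol j ⊆ S.sol (i - 1) ∪ vertPath 0 (S.t (i - 1)) (S.t i) :=
    (S.sol_subset (by omega) (by omega)).trans subset_union_left
  exact S.closest_late i hi1 hiN (S.t j) (S.t_mono j i hji.le hiN) (Repl_mono hsub htop)
end

section
/- Let r_j and r_ℓ be requests with j>ℓ, and suppose v_j−ρ(j)+1 ≤ u^s_ℓ ≤ v_j (the tail of request ℓ is in the range of the quarter ball of request j). Then t_j−ρ(j) ≥ t_ℓ+4·ρ(ℓ). -/
open Finset

lemma mem_Repl_vertPath_s9 {u s τ x : ℕ} (hs : s < x) (hτ : x ≤ τ) :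
    (u, x) ∈ Repl (vertPath u s τ) := by
  refine Set.mem_insert_of_mem _ ⟨((u, x - 1), (u, x)), ?_, Or.inr rfl⟩
  simp only [vertPath, Finset.mem_image, Finset.mem_range]
  exact ⟨x - 1 - s, by omega, by ext <;> simp <;> omega⟩

namespace SquareRun

variable (S : SquareRun)

/-- The current solution when SQ2 handles request `i`, i.e. after SQ1. -/
def preSol (i : ℕ) : Finset GEdge := S.sol (i - 1) ∪ vertPath 0 (S.t (i - 1)) (S.t i)

lemma preSol_subset_sol {i : ℕ} (hi1 : 1 ≤ i) (hiN : i ≤ S.N) : S.preSol i ⊆ S.sol i := by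
  rw [S.step i hi1 hiN]
  exact subset_union_left.trans (subset_union_left.trans subset_union_left)

lemma sol_mono_s9 {i m : ℕ} (him : i ≤ m) (hmN : m ≤ S.N) : S.sol i ⊆ S.sol m := by
  induction m, him using Nat.le_induction with
  | base => exact subset_rfl
  | succ m _ ih =>
    have hstep : S.preSol (m + 1) ⊆ S.sol (m + 1) := S.preSol_subset_sol (by omega) hmN
    exact (ih (by omega)).trans (subset_union_left.trans hstep)

lemma sol_subset_preSol {ℓ j : ℕ} (hℓj : ℓ < j) (hjN : j ≤ S.N) : S.sol ℓ ⊆ S.preSol j :=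
  (S.sol_mono_s9 (Nat.le_sub_one_of_lt hℓj) (by omega)).trans subset_union_left

lemma tail_mem_Repl_sol {ℓ x : ℕ} (hℓ1 : 1 ≤ ℓ) (hℓN : ℓ ≤ S.N) (hsx : S.ss ℓ ≤ x)
    (hx : x ≤ S.t ℓ + 4 * S.ρ ℓ) : (S.us ℓ, x) ∈ Repl (S.sol ℓ) := by
  rw [S.step ℓ hℓ1 hℓN]
  rcases hsx.eq_or_lt with rfl | hsx
  · exact Repl_mono (subset_union_left.trans (subset_union_left.trans subset_union_left))
      (S.serv_mem ℓ hℓ1 hℓN).1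
  rcases le_or_gt x (S.t ℓ) with hxt | hxt
  · exact Repl_mono (subset_union_right.trans (subset_union_left.trans subset_union_left))
      (mem_Repl_vertPath_s9 hsx hxt)
  · exact Repl_mono subset_union_right (mem_Repl_vertPath_s9 hxt hx)

lemma rho_le_of_mem_Repl {j : ℕ} {q : Replica} (hj1 : 1 ≤ j) (hjN : j ≤ S.N)
    (hq : q ∈ Repl (S.preSol j)) (hv : q.1 ≤ S.v j) (ht : q.2 ≤ S.t j) :
    S.ρ j ≤ max (S.v j - q.1) (S.t j - q.2) := by
  have h := S.rho_min j hj1 hjN q hq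
  rw [distInf, if_pos ⟨hv, ht⟩] at h
  exact_mod_cast h

end SquareRun

/-- If the tail of request `ℓ` is in the range of the quarter ball of request
`j > ℓ`, i.e. `v_j − ρ(j) + 1 ≤ u^s_ℓ ≤ v_j`, then
`t_j − ρ(j) ≥ t_ℓ + 4ρ(ℓ)`. -/
theorem ball_later_than_tail (S : SquareRun) (j ℓ : ℕ)
    (hℓ1 : 1 ≤ ℓ) (hℓj : ℓ < j) (hjN : j ≤ S.N)
    (h1 : (S.v j : ℤ) - S.ρ j + 1 ≤ (S.us ℓ : ℤ)) (h2 : S.us ℓ ≤ S.v j) :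
    (S.t ℓ : ℤ) + 4 * S.ρ ℓ ≤ (S.t j : ℤ) - S.ρ j := by
  -- The tail replica of `ℓ` at time `s₀` is less than `ρ(j)` to the left of `r_j`, so minimality
  -- of `ρ(j)` puts it at least `ρ(j)` below `t_j`; in particular `s₀ = t_ℓ + 4ρ(ℓ)`.
  set s₀ := min (S.t j) (S.t ℓ + 4 * S.ρ ℓ)
  have hℓN : ℓ ≤ S.N := by omega
  have hss : S.ss ℓ ≤ S.t ℓ := (S.serv_mem ℓ hℓ1 hℓN).2.2.2.2
  have htℓj : S.t ℓ ≤ S.t j := S.t_mono ℓ j hℓj.le hjN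
  have hmem : (S.us ℓ, s₀) ∈ Repl (S.preSol j) :=
    Repl_mono (S.sol_subset_preSol hℓj hjN)
      (S.tail_mem_Repl_sol hℓ1 hℓN (le_min (by omega) (by omega)) (min_le_right _ _))
  have hρ := S.rho_le_of_mem_Repl (by omega) hjN hmem h2 (min_le_left _ _)
  simp only [s₀] at hρ
  omega
end
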